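/- For every MM network with output y and every δ > 0, there exists β > 0 such that the SMM network with the same weights and biases and parameter β satisfies |y(x) − y_SMM(x)| ≤ δ for all x ∈ ℝ^d. -/

import Mathlib

/-- The scaled LogSumExp function: `LSE_β(x₁,…,xₙ) = (1/β)·log(∑ i, exp(β·xᵢ))`. -/
noncomputable def lse (β : ℝ) {n : ℕ} (x : Fin n → ℝ) : ℝ :=
  (1 / β) * Real.log (∑ i, Real.exp (β * x i))

/-- Output of a min-max (MM) network: `y(x) = min_k max_j (w^(k,j)·x − b^(k,j))`. -/
noncomputable def mmOut {d K : ℕ} {h : Fin K → ℕ} (hK : 0 < K) (hh : ∀ k, 0 < h k)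
    (w : (k : Fin K) → Fin (h k) → Fin d → ℝ)
    (b : (k : Fin K) → Fin (h k) → ℝ) (x : Fin d → ℝ) : ℝ :=
  haveI : Nonempty (Fin K) := Fin.pos_iff_nonempty.mp hK
  Finset.univ.inf' Finset.univ_nonempty fun k =>
    haveI : Nonempty (Fin (h k)) := Fin.pos_iff_nonempty.mp (hh k)
    Finset.univ.sup' Finset.univ_nonempty fun j => (∑ i, w k j i * x i) - b k j

/-- Output of a smooth min-max (SMM) network. -/
noncomputable def smmOut {d K : ℕ} {h : Fin K → ℕ} (β : ℝ)
    (w : (k : Fin K) → Fin (h k) → Fin d → ℝ)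
    (b : (k : Fin K) → Fin (h k) → ℝ) (x : Fin d → ℝ) : ℝ :=
  lse (-β) fun k => lse β fun j => (∑ i, w k j i * x i) - b k j

/-!
`LSE_β` overestimates the maximum of `n` numbers by at most `log n / β`, and `LSE_{-β}`
underestimates their minimum by at most `log n / β`. Since the minimum of a finite family is
1-Lipschitz in the sup norm, the two errors add up: the SMM network is within
`(log K + ∑ₖ log hₖ) / β` of the MM network everywhere, which is `≤ δ` once `β` is large.
-/

open Finset Real

section LSE

variable {β : ℝ} {n : ℕ}

lemma lse_neg (β : ℝ) (x : Fin n → ℝ) : lse (-β) x = -lse β (-x) := by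
  simp only [lse, Pi.neg_apply, neg_mul, mul_neg]
  ring

lemma le_lse (hβ : 0 < β) (x : Fin n → ℝ) (i : Fin n) : x i ≤ lse β x := by
  have hexp : exp (β * x i) ≤ ∑ j, exp (β * x j) :=
    single_le_sum (f := fun j => exp (β * x j)) (fun j _ => (exp_pos _).le) (mem_univ i)
  have hlog : β * x i ≤ log (∑ j, exp (β * x j)) := by
    simpa only [log_exp] using log_le_log (exp_pos _) hexp
  rw [lse, one_div_mul_eq_div, le_div_iff₀ hβ, mul_comm]
  exact hlog

lemma lse_le_add_of_forall_le [Nonempty (Fin n)] (hβ : 0 < β) {x : Fin n → ℝ} {m : ℝ}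
    (hm : ∀ i, x i ≤ m) : lse β x ≤ m + log n / β := by
  have hn : (0 : ℝ) < n := Nat.cast_pos.mpr (Fin.pos_iff_nonempty.mpr ‹_›)
  have hsum : ∑ i, exp (β * x i) ≤ n * exp (β * m) := by
    simpa using sum_le_sum fun i (_ : i ∈ univ) =>
      exp_le_exp.mpr (mul_le_mul_of_nonneg_left (hm i) hβ.le)
  have hlog : log (∑ i, exp (β * x i)) ≤ log n + β * m := by
    rw [← log_exp (β * m), ← log_mul hn.ne' (exp_pos _).ne']
    exact log_le_log (sum_pos (fun i _ => exp_pos _) univ_nonempty) hsum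
  rw [lse, one_div_mul_eq_div, div_le_iff₀ hβ]
  calc log (∑ i, exp (β * x i)) ≤ log n + β * m := hlog
    _ = (m + log n / β) * β := by field_simp; ring

lemma abs_lse_sub_sup'_le [Nonempty (Fin n)] (hβ : 0 < β) (x : Fin n → ℝ) :
    |lse β x - univ.sup' univ_nonempty x| ≤ log n / β := by
  have hlow : univ.sup' univ_nonempty x ≤ lse β x := sup'_le _ _ fun i _ => le_lse hβ x i
  have hup := lse_le_add_of_forall_le hβ (m := univ.sup' univ_nonempty x) fun i =>
    le_sup' x (mem_univ i)
  rw [abs_le]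
  constructor <;> linarith [div_nonneg (log_natCast_nonneg n) hβ.le]

lemma abs_lse_neg_sub_inf'_le [Nonempty (Fin n)] (hβ : 0 < β) (x : Fin n → ℝ) :
    |lse (-β) x - univ.inf' univ_nonempty x| ≤ log n / β := by
  have hup : lse (-β) x ≤ univ.inf' univ_nonempty x :=
    le_inf' _ _ fun i _ => by rw [lse_neg]; linarith [le_lse hβ (-x) i, Pi.neg_apply x i]
  have hlow := lse_le_add_of_forall_le hβ (x := -x) (m := -univ.inf' univ_nonempty x) fun i =>
    neg_le_neg (inf'_le x (mem_univ i))
  rw [abs_le]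
  constructor <;> linarith [lse_neg β x, div_nonneg (log_natCast_nonneg n) hβ.le]

end LSE

lemma Finset.abs_inf'_sub_inf'_le {ι : Type*} {s : Finset ι} (hs : s.Nonempty) {f g : ι → ℝ}
    {ε : ℝ} (hfg : ∀ i ∈ s, |f i - g i| ≤ ε) : |s.inf' hs f - s.inf' hs g| ≤ ε := by
  have key : ∀ f g : ι → ℝ, (∀ i ∈ s, |f i - g i| ≤ ε) → s.inf' hs f ≤ s.inf' hs g + ε :=
    fun f g hfg => by
      rw [← sub_le_iff_le_add]
      refine le_inf' _ _ fun i hi => ?_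
      linarith [inf'_le f hi, (abs_le.mp (hfg i hi)).2]
  rw [abs_le]
  constructor
  · linarith [key g f fun i hi => abs_sub_comm (f i) (g i) ▸ hfg i hi]
  · linarith [key f g hfg]

lemma abs_mmOut_sub_smmOut_le {d K : ℕ} {h : Fin K → ℕ} (hK : 0 < K) (hh : ∀ k, 0 < h k)
    (w : (k : Fin K) → Fin (h k) → Fin d → ℝ) (b : (k : Fin K) → Fin (h k) → ℝ)
    {β : ℝ} (hβ : 0 < β) (x : Fin d → ℝ) :
    |mmOut hK hh w b x - smmOut β w b x| ≤ (log K + ∑ k, log (h k)) / β := by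
  have : Nonempty (Fin K) := Fin.pos_iff_nonempty.mp hK
  have (k : Fin K) : Nonempty (Fin (h k)) := Fin.pos_iff_nonempty.mp (hh k)
  set a : (k : Fin K) → Fin (h k) → ℝ := fun k j => (∑ i, w k j i * x i) - b k j
  set g : Fin K → ℝ := fun k => lse β (a k)
  have hgroup : ∀ k ∈ univ, |univ.sup' univ_nonempty (a k) - g k| ≤ (∑ k, log (h k)) / β :=
    fun k _ => by
      rw [abs_sub_comm]
      refine (abs_lse_sub_sup'_le hβ (a k)).trans (div_le_div_of_nonneg_right ?_ hβ.le)
      exact single_le_sum (f := fun k => log (h k)) (fun k _ => log_natCast_nonneg _)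
        (mem_univ k)
  calc |mmOut hK hh w b x - smmOut β w b x|
      ≤ |mmOut hK hh w b x - univ.inf' univ_nonempty g|
        + |univ.inf' univ_nonempty g - smmOut β w b x| := abs_sub_le _ _ _
    _ ≤ (∑ k, log (h k)) / β + log K / β := by
        gcongr
        · exact abs_inf'_sub_inf'_le _ hgroup
        · rw [abs_sub_comm]
          exact abs_lse_neg_sub_inf'_le hβ g
    _ = (log K + ∑ k, log (h k)) / β := by ring

theorem exists_beta_smm_close_general {d K : ℕ} {h : Fin K → ℕ} (hK : 0 < K) (hh : ∀ k, 0 < h k)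
    (w : (k : Fin K) → Fin (h k) → Fin d → ℝ)
    (b : (k : Fin K) → Fin (h k) → ℝ)
    (δ : ℝ) (hδ : 0 < δ) :
    ∃ β : ℝ, 0 < β ∧ ∀ x : Fin d → ℝ,
      |mmOut hK hh w b x - smmOut β w b x| ≤ δ := by
  set C := log K + ∑ k, log (h k)
  have hC : 0 ≤ C :=
    add_nonneg (log_natCast_nonneg K) (sum_nonneg fun k _ => log_natCast_nonneg (h k))
  have hβ : 0 < (C + 1) / δ := by positivity
  refine ⟨(C + 1) / δ, hβ, fun x => (abs_mmOut_sub_smmOut_le hK hh w b hβ x).trans ?_⟩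
  rw [div_div_eq_mul_div, div_le_iff₀ (by positivity)]
  nlinarith

/-- For every MM network and every `δ > 0` there is `β > 0` such that the SMM network
with the same weights and biases satisfies `|y(x) − y_SMM(x)| ≤ δ` for all `x`. -/
theorem exists_beta_smm_close {d K : ℕ} {h : Fin K → ℕ} (hK : 0 < K) (hh : ∀ k, 0 < h k)
    (w : (k : Fin K) → Fin (h k) → Fin d → ℝ) (hw : ∀ k j i, 0 ≤ w k j i)
    (b : (k : Fin K) → Fin (h k) → ℝ)
    (δ : ℝ) (hδ : 0 < δ) :
    ∃ β : ℝ, 0 < β ∧ ∀ x : Fin d → ℝ,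
      |mmOut hK hh w b x - smmOut β w b x| ≤ δ :=
  exists_beta_smm_close_general hK hh w b δ hδ
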